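/- arXiv:1709.01003 — 2 statements merged into one kernel-verified Lean document; each statement's English description precedes it below -/
import Mathlib

section
/- Let A : Ω → ℝ^{n×n} be γ-Hölder continuous with A(0) = I_n, where 0 ∈ Ω and γ ∈ (0,1). Define μ(x) = ⟨A(x) x/|x|, x/|x|⟩ for x ≠ 0 and μ(0) = 1. Then μ is γ-Hölder continuous on Ω: there is a constant C, depending only on the Hölder seminorm of A, such that |μ(x) − μ(y)| ≤ C |x − y|^γ for all x, y ∈ Ω. -/
open scoped RealInnerProductSpace Classical

private lemma rineq (γ a d : ℝ) (hγ0 : 0 < γ) (hγ1 : γ ≤ 1) (ha : 0 < a) (hd : 0 ≤ d)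
    (hda : d ≤ 2 * a) : a ^ γ * d ≤ 2 * a * d ^ γ := by
  rcases eq_or_lt_of_le hd with h | hd'
  · simp [← h, Real.zero_rpow (ne_of_gt hγ0)]
  have e3 : a ^ γ * a ^ (1 - γ) = a := by
    rw [← Real.rpow_add ha]; norm_num
  have e1 : a ^ γ * d = (a ^ γ * d ^ γ) * d ^ (1 - γ) := by
    rw [mul_assoc, ← Real.rpow_add hd']; norm_num
  have e2 : d ^ (1 - γ) ≤ 2 * a ^ (1 - γ) := by
    calc d ^ (1 - γ) ≤ (2 * a) ^ (1 - γ) := Real.rpow_le_rpow hd hda (by linarith)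
      _ = 2 ^ (1 - γ) * a ^ (1 - γ) := Real.mul_rpow (by norm_num) ha.le
      _ ≤ 2 * a ^ (1 - γ) := by
          have : (2:ℝ) ^ (1 - γ) ≤ 2 ^ (1:ℝ) :=
            Real.rpow_le_rpow_of_exponent_le (by norm_num) (by linarith)
          rw [Real.rpow_one] at this
          exact mul_le_mul_of_nonneg_right this (Real.rpow_nonneg ha.le _)
  calc a ^ γ * d = (a ^ γ * d ^ γ) * d ^ (1 - γ) := e1
    _ ≤ (a ^ γ * d ^ γ) * (2 * a ^ (1 - γ)) := by
        exact mul_le_mul_of_nonneg_left e2 (by positivity)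
    _ = 2 * (a ^ γ * a ^ (1 - γ)) * d ^ γ := by ring
    _ = 2 * a * d ^ γ := by rw [e3]

private lemma unit_diff {E : Type*} [NormedAddCommGroup E] [NormedSpace ℝ E]
    (x y : E) (hx : x ≠ 0) (hy : y ≠ 0) (hxy : ‖y‖ ≤ ‖x‖) :
    ‖‖x‖⁻¹ • x - ‖y‖⁻¹ • y‖ ≤ 2 * ‖x - y‖ / ‖x‖ := by
  have ha : (0:ℝ) < ‖x‖ := norm_pos_iff.mpr hx
  have hb : (0:ℝ) < ‖y‖ := norm_pos_iff.mpr hy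
  have key : ‖x‖⁻¹ • x - ‖y‖⁻¹ • y = ‖x‖⁻¹ • (x - y) + (‖x‖⁻¹ - ‖y‖⁻¹) • y := by
    module
  have h1 : ‖‖x‖⁻¹ • (x - y)‖ = ‖x - y‖ / ‖x‖ := by
    rw [norm_smul, norm_inv, norm_norm, inv_mul_eq_div]
  have h2 : ‖(‖x‖⁻¹ - ‖y‖⁻¹) • y‖ = (‖y‖⁻¹ - ‖x‖⁻¹) * ‖y‖ := by
    rw [norm_smul, Real.norm_eq_abs, abs_of_nonpos (by
      have : ‖x‖⁻¹ ≤ ‖y‖⁻¹ := inv_anti₀ hb hxy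
      linarith)]
    ring
  have h3 : (‖y‖⁻¹ - ‖x‖⁻¹) * ‖y‖ ≤ ‖x - y‖ / ‖x‖ := by
    have heq : (‖y‖⁻¹ - ‖x‖⁻¹) * ‖y‖ = (‖x‖ - ‖y‖) / ‖x‖ := by
      field_simp
    rw [heq]
    have : ‖x‖ - ‖y‖ ≤ ‖x - y‖ := by
      have := abs_norm_sub_norm_le x y
      have := abs_le.mp this
      linarith [this.2]
    exact (div_le_div_iff_of_pos_right ha).mpr this
  calc ‖‖x‖⁻¹ • x - ‖y‖⁻¹ • y‖
      = ‖‖x‖⁻¹ • (x - y) + (‖x‖⁻¹ - ‖y‖⁻¹) • y‖ := by rw [key]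
    _ ≤ ‖‖x‖⁻¹ • (x - y)‖ + ‖(‖x‖⁻¹ - ‖y‖⁻¹) • y‖ := norm_add_le _ _
    _ ≤ ‖x - y‖ / ‖x‖ + ‖x - y‖ / ‖x‖ := by rw [h1, h2]; linarith
    _ = 2 * ‖x - y‖ / ‖x‖ := by ring

private lemma aux_inner {E : Type*} [NormedAddCommGroup E] [InnerProductSpace ℝ E]
    (S T : E →L[ℝ] E) (u v : E) (hu : ‖u‖ = 1) (hv : ‖v‖ = 1) :
    |⟪S u, u⟫ - ⟪T v, v⟫| ≤ ‖S - T‖ + 2 * ‖T - 1‖ * ‖u - v‖ := by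
  have huu : ⟪u, u⟫ = (1:ℝ) := by rw [real_inner_self_eq_norm_mul_norm, hu]; norm_num
  have hvv : ⟪v, v⟫ = (1:ℝ) := by rw [real_inner_self_eq_norm_mul_norm, hv]; norm_num
  have key : ⟪S u, u⟫ - ⟪T v, v⟫
      = ⟪(S - T) u, u⟫ + (⟪(T - 1) (u - v), u⟫ + ⟪(T - 1) v, u - v⟫) := by
    simp only [ContinuousLinearMap.sub_apply, ContinuousLinearMap.one_apply, map_sub,
      inner_sub_left, inner_sub_right]
    rw [huu, hvv]
    ring
  have b1 : |⟪(S - T) u, u⟫| ≤ ‖S - T‖ := by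
    calc |⟪(S - T) u, u⟫| ≤ ‖(S - T) u‖ * ‖u‖ := abs_real_inner_le_norm _ _
      _ = ‖(S - T) u‖ := by rw [hu, mul_one]
      _ ≤ ‖S - T‖ := by simpa [hu] using (S - T).le_opNorm u
  have b2 : |⟪(T - 1) (u - v), u⟫| ≤ ‖T - 1‖ * ‖u - v‖ := by
    calc |⟪(T - 1) (u - v), u⟫| ≤ ‖(T - 1) (u - v)‖ * ‖u‖ := abs_real_inner_le_norm _ _
      _ = ‖(T - 1) (u - v)‖ := by rw [hu, mul_one]
      _ ≤ ‖T - 1‖ * ‖u - v‖ := (T - 1).le_opNorm _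
  have b3 : |⟪(T - 1) v, u - v⟫| ≤ ‖T - 1‖ * ‖u - v‖ := by
    calc |⟪(T - 1) v, u - v⟫| ≤ ‖(T - 1) v‖ * ‖u - v‖ := abs_real_inner_le_norm _ _
      _ ≤ (‖T - 1‖ * ‖v‖) * ‖u - v‖ :=
          mul_le_mul_of_nonneg_right ((T - 1).le_opNorm v) (norm_nonneg _)
      _ = ‖T - 1‖ * ‖u - v‖ := by rw [hv, mul_one]
  rw [key]
  calc |⟪(S - T) u, u⟫ + (⟪(T - 1) (u - v), u⟫ + ⟪(T - 1) v, u - v⟫)|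
      ≤ |⟪(S - T) u, u⟫| + |⟪(T - 1) (u - v), u⟫ + ⟪(T - 1) v, u - v⟫| := abs_add_le _ _
    _ ≤ |⟪(S - T) u, u⟫| + (|⟪(T - 1) (u - v), u⟫| + |⟪(T - 1) v, u - v⟫|) := by
        linarith [abs_add_le (⟪(T - 1) (u - v), u⟫) (⟪(T - 1) v, u - v⟫)]
    _ ≤ ‖S - T‖ + 2 * ‖T - 1‖ * ‖u - v‖ := by linarith

theorem stmt3 (n : ℕ) (Ω : Set (EuclideanSpace ℝ (Fin n))) (hΩ : IsOpen Ω) (h0 : 0 ∈ Ω)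
    (γ H : ℝ) (hγ : γ ∈ Set.Ioo (0:ℝ) 1) (hH : 0 ≤ H)
    (A : EuclideanSpace ℝ (Fin n) → Matrix (Fin n) (Fin n) ℝ) (hA0 : A 0 = 1)
    (hHold : ∀ x ∈ Ω, ∀ y ∈ Ω,
      ‖(Matrix.toEuclideanCLM (𝕜 := ℝ) (A x) : EuclideanSpace ℝ (Fin n) →L[ℝ] EuclideanSpace ℝ (Fin n))
        - Matrix.toEuclideanCLM (𝕜 := ℝ) (A y)‖ ≤ H * ‖x - y‖ ^ γ)
    (μ : EuclideanSpace ℝ (Fin n) → ℝ)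
    (hμ : ∀ x, μ x = if x = 0 then 1 else
      ⟪Matrix.toEuclideanCLM (𝕜 := ℝ) (A x) (‖x‖⁻¹ • x), ‖x‖⁻¹ • x⟫) :
    ∃ C : ℝ, 0 ≤ C ∧ ∀ x ∈ Ω, ∀ y ∈ Ω, |μ x - μ y| ≤ C * ‖x - y‖ ^ γ := by
  obtain ⟨hγ0, hγ1⟩ := hγ
  have hB : ∀ z ∈ Ω,
      ‖(Matrix.toEuclideanCLM (𝕜 := ℝ) (A z) : EuclideanSpace ℝ (Fin n) →L[ℝ] EuclideanSpace ℝ (Fin n)) - 1‖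
        ≤ H * ‖z‖ ^ γ := by
    intro z hz
    have := hHold z hz 0 h0
    rw [hA0, map_one, sub_zero] at this
    exact this
  have main : ∀ x ∈ Ω, ∀ y ∈ Ω, ‖y‖ ≤ ‖x‖ →
      |μ x - μ y| ≤ 9 * H * ‖x - y‖ ^ γ := by
    intro x hx y hy hxy
    rw [hμ x, hμ y]
    by_cases hx0 : x = 0
    · have hy0 : y = 0 := by
        rw [hx0, norm_zero] at hxy
        exact norm_le_zero_iff.mp hxy
      rw [if_pos hx0, if_pos hy0]
      simp only [sub_self, abs_zero]
      positivity
    by_cases hy0 : y = 0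
    · subst hy0
      rw [if_neg hx0, if_pos rfl]
      set S := (Matrix.toEuclideanCLM (𝕜 := ℝ) (A x) : EuclideanSpace ℝ (Fin n) →L[ℝ] EuclideanSpace ℝ (Fin n))
      set u := ‖x‖⁻¹ • x with hu_def
      have hu : ‖u‖ = 1 := norm_smul_inv_norm hx0
      have h1 : ‖S - 1‖ ≤ H * ‖x‖ ^ γ := hB x hx
      have heq : ⟪S u, u⟫ - 1 = ⟪(S - 1) u, u⟫ := by
        have huu : ⟪u, u⟫ = (1:ℝ) := by rw [real_inner_self_eq_norm_mul_norm, hu]; norm_num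
        simp only [ContinuousLinearMap.sub_apply, ContinuousLinearMap.one_apply, inner_sub_left]
        rw [huu]
      rw [heq, sub_zero]
      calc |⟪(S - 1) u, u⟫| ≤ ‖(S - 1) u‖ * ‖u‖ := abs_real_inner_le_norm _ _
        _ ≤ (‖S - 1‖ * ‖u‖) * ‖u‖ :=
            mul_le_mul_of_nonneg_right ((S - 1).le_opNorm u) (norm_nonneg _)
        _ = ‖S - 1‖ := by rw [hu]; ring
        _ ≤ H * ‖x‖ ^ γ := h1
        _ ≤ 9 * H * ‖x‖ ^ γ := by
            nlinarith [Real.rpow_nonneg (norm_nonneg x) γ,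
              mul_nonneg hH (Real.rpow_nonneg (norm_nonneg x) γ)]
    · rw [if_neg hx0, if_neg hy0]
      set S := (Matrix.toEuclideanCLM (𝕜 := ℝ) (A x) : EuclideanSpace ℝ (Fin n) →L[ℝ] EuclideanSpace ℝ (Fin n))
      set T := (Matrix.toEuclideanCLM (𝕜 := ℝ) (A y) : EuclideanSpace ℝ (Fin n) →L[ℝ] EuclideanSpace ℝ (Fin n))
      set u := ‖x‖⁻¹ • x
      set v := ‖y‖⁻¹ • y
      have hu : ‖u‖ = 1 := norm_smul_inv_norm hx0
      have hv : ‖v‖ = 1 := norm_smul_inv_norm hy0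
      have ha : (0:ℝ) < ‖x‖ := norm_pos_iff.mpr hx0
      have hST : ‖S - T‖ ≤ H * ‖x - y‖ ^ γ := hHold x hx y hy
      have hT1 : ‖T - 1‖ ≤ H * ‖y‖ ^ γ := hB y hy
      have huv : ‖u - v‖ ≤ 2 * ‖x - y‖ / ‖x‖ := unit_diff x y hx0 hy0 hxy
      have hyx : ‖y‖ ^ γ ≤ ‖x‖ ^ γ := Real.rpow_le_rpow (norm_nonneg _) hxy hγ0.le
      have hda : ‖x - y‖ ≤ 2 * ‖x‖ := by
        have := norm_sub_le x y
        linarith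
      have key := rineq γ ‖x‖ ‖x - y‖ hγ0 hγ1.le ha (norm_nonneg _) hda
      have step : 2 * (H * ‖x‖ ^ γ) * (2 * ‖x - y‖ / ‖x‖) ≤ 8 * H * ‖x - y‖ ^ γ := by
        have h8 : (4 * H / ‖x‖) * (2 * ‖x‖ * ‖x - y‖ ^ γ) = 8 * H * ‖x - y‖ ^ γ := by
          field_simp
          ring
        calc 2 * (H * ‖x‖ ^ γ) * (2 * ‖x - y‖ / ‖x‖)
            = (4 * H / ‖x‖) * (‖x‖ ^ γ * ‖x - y‖) := by ring
          _ ≤ (4 * H / ‖x‖) * (2 * ‖x‖ * ‖x - y‖ ^ γ) :=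
              mul_le_mul_of_nonneg_left key (by positivity)
          _ = 8 * H * ‖x - y‖ ^ γ := h8
      calc |⟪S u, u⟫ - ⟪T v, v⟫| ≤ ‖S - T‖ + 2 * ‖T - 1‖ * ‖u - v‖ := aux_inner S T u v hu hv
        _ ≤ H * ‖x - y‖ ^ γ + 2 * (H * ‖x‖ ^ γ) * (2 * ‖x - y‖ / ‖x‖) := by
            have hT1' : ‖T - 1‖ ≤ H * ‖x‖ ^ γ := hT1.trans (by
              exact mul_le_mul_of_nonneg_left hyx hH)
            have h2 : 2 * ‖T - 1‖ * ‖u - v‖ ≤ 2 * (H * ‖x‖ ^ γ) * (2 * ‖x - y‖ / ‖x‖) := by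
              apply mul_le_mul (by linarith [hT1']) huv (norm_nonneg _) (by positivity)
            linarith
        _ ≤ H * ‖x - y‖ ^ γ + 8 * H * ‖x - y‖ ^ γ := by linarith
        _ = 9 * H * ‖x - y‖ ^ γ := by ring
  refine ⟨9 * H, by positivity, ?_⟩
  intro x hx y hy
  rcases le_total ‖y‖ ‖x‖ with h | h
  · exact main x hx y hy h
  · rw [abs_sub_comm, norm_sub_rev]
    exact main y hy x hx h
end

section
/- Suppose ω : (0,1] → [0,∞) is nondecreasing and satisfies ∫₀¹ ω(r) |log r|^a / r dr < ∞ for some a ≥ 1. Then for every fixed c > 0 and every t ∈ (0, 1), one has t^c ∫_t^{1} ω(r) r^{−1−c} dr + ∫₀^t ω(r)/r dr ≤ |log t|^{−a} ∫₀^{1} ω(r) |log t|^{a} / r dr, provided t is small; in particular t^c ∫_t^1 ω(r) r^{−1−c} dr → 0 as t → 0⁺. -/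
open MeasureTheory Filter

open Set Real Topology

/-! Since `t ^ c * r ^ (-1 - c) = (t / r) ^ c / r` with `0 ≤ (t / r) ^ c ≤ 1` for `t ≤ r`, the first
term is at most `∫_t^1 ω r / r`, and the right-hand side is `∫_0^1 ω r / r` once the factors
`|log t| ^ (±a)` cancel. The function `ω r / r` is integrable: near `0` it is dominated by the Dini
integrand since `|log r| ^ a ≥ 1`, and away from `0` by `e * ω 1`. It also dominates
`(t / r) ^ c * ω r / r`, which tends to `0` pointwise, so the limit follows by dominated
convergence. -/

lemma inv_le_abs_log_rpow_div_add_exp_one {r a : ℝ} (hr : 0 < r) (ha : 0 ≤ a) :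
    r⁻¹ ≤ |log r| ^ a / r + exp 1 := by
  rcases le_or_gt r (exp (-1)) with hsmall | hlarge
  · have hlog : 1 ≤ |log r| := by
      have : log r ≤ -1 := by simpa using log_le_log hr hsmall
      exact le_abs.2 (Or.inr (by linarith))
    have : r⁻¹ ≤ |log r| ^ a / r := by
      rw [inv_eq_one_div]
      gcongr
      exact one_le_rpow hlog ha
    linarith [exp_pos 1]
  · have : r⁻¹ < exp 1 := by
      simpa [exp_neg] using inv_strictAnti₀ (exp_pos (-1)) hlarge
    have : 0 ≤ |log r| ^ a / r := by positivity
    linarith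

theorem integrableOn_div_of_integrableOn_mul_abs_log_rpow_div {ω : ℝ → ℝ} {a : ℝ}
    (hω0 : ∀ r ∈ Ioc (0:ℝ) 1, 0 ≤ ω r) (hmono : MonotoneOn ω (Ioc 0 1)) (ha : 0 ≤ a)
    (h : IntegrableOn (fun r => ω r * |log r| ^ a / r) (Ioc 0 1)) :
    IntegrableOn (fun r => ω r / r) (Ioc 0 1) := by
  have hmeas : AEMeasurable ω (volume.restrict (Ioc (0:ℝ) 1)) :=
    aemeasurable_restrict_of_monotoneOn measurableSet_Ioc hmono
  refine Integrable.mono' (h.add (integrableOn_const (C := exp 1 * ω 1) (by simp)))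
    (hmeas.div aemeasurable_id).aestronglyMeasurable ?_
  filter_upwards [ae_restrict_mem measurableSet_Ioc] with r hr
  have hωr := hω0 r hr
  rw [norm_of_nonneg (div_nonneg hωr hr.1.le)]
  calc ω r / r = ω r * r⁻¹ := div_eq_mul_inv _ _
    _ ≤ ω r * (|log r| ^ a / r + exp 1) :=
      mul_le_mul_of_nonneg_left (inv_le_abs_log_rpow_div_add_exp_one hr.1 ha) hωr
    _ = ω r * |log r| ^ a / r + exp 1 * ω r := by ring
    _ ≤ ω r * |log r| ^ a / r + exp 1 * ω 1 := by
      gcongr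
      exact hmono hr (right_mem_Ioc.2 one_pos) hr.2

lemma div_rpow_mem_Icc {t r c : ℝ} (ht : 0 ≤ t) (htr : t ≤ r) (hc : 0 ≤ c) :
    (t / r) ^ c ∈ Icc 0 1 :=
  have hq : 0 ≤ t / r := div_nonneg ht (ht.trans htr)
  ⟨rpow_nonneg hq c, rpow_le_one hq (div_le_one_of_le₀ htr (ht.trans htr)) hc⟩

theorem setIntegral_Ioc_div_rpow_mul_le {g : ℝ → ℝ} {t b c : ℝ} (ht : 0 ≤ t) (hc : 0 ≤ c)
    (hg : IntegrableOn g (Ioc t b)) (hg0 : ∀ r ∈ Ioc t b, 0 ≤ g r) :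
    ∫ r in Ioc t b, (t / r) ^ c * g r ≤ ∫ r in Ioc t b, g r := by
  refine integral_mono_of_nonneg ?_ hg ?_ <;>
    filter_upwards [ae_restrict_mem measurableSet_Ioc] with r hr
  · exact mul_nonneg (div_rpow_mem_Icc ht hr.1.le hc).1 (hg0 r hr)
  · exact mul_le_of_le_one_left (hg0 r hr) (div_rpow_mem_Icc ht hr.1.le hc).2

theorem tendsto_setIntegral_Ioc_div_rpow_mul {g : ℝ → ℝ} {b c : ℝ} (hc : 0 < c)
    (hg : IntegrableOn g (Ioc 0 b)) :
    Tendsto (fun t => ∫ r in Ioc t b, (t / r) ^ c * g r) (𝓝[>] 0) (𝓝 0) := by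
  set F : ℝ → ℝ → ℝ := fun t => (Ioc t b).indicator fun r => (t / r) ^ c * g r
  have hF : ∀ t, 0 ≤ t → ∫ r in Ioc t b, (t / r) ^ c * g r = ∫ r in Ioc 0 b, F t r := by
    intro t ht
    rw [setIntegral_indicator measurableSet_Ioc,
      inter_eq_self_of_subset_right (Ioc_subset_Ioc_left ht)]
  have hlim : Tendsto (fun t => ∫ r in Ioc 0 b, F t r) (𝓝[>] 0)
      (𝓝 (∫ r in Ioc 0 b, (0 : ℝ))) := by
    refine tendsto_integral_filter_of_dominated_convergence (fun r => ‖g r‖) ?_ ?_ hg.norm ?_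
    · refine Eventually.of_forall fun t => AEStronglyMeasurable.indicator ?_ measurableSet_Ioc
      exact (((measurable_const.div measurable_id).pow_const c).aestronglyMeasurable).mul
        hg.aestronglyMeasurable
    · filter_upwards [self_mem_nhdsWithin] with t ht
      refine ae_of_all _ fun r => ?_
      by_cases hr : r ∈ Ioc t b
      · have hI := div_rpow_mem_Icc (le_of_lt ht) hr.1.le hc.le
        simp only [F, indicator_of_mem hr, norm_mul, norm_of_nonneg hI.1]
        exact mul_le_of_le_one_left (norm_nonneg _) hI.2
      · simp [F, indicator_of_notMem hr]
    · filter_upwards [ae_restrict_mem measurableSet_Ioc] with r hr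
      have hcont : Tendsto (fun t : ℝ => (t / r) ^ c * g r) (𝓝[>] 0) (𝓝 0) := by
        have : Continuous fun t : ℝ => (t / r) ^ c * g r :=
          ((continuous_id.div_const r).rpow_const fun _ => Or.inr hc.le).mul continuous_const
        simpa [zero_rpow hc.ne'] using this.tendsto 0 |>.mono_left nhdsWithin_le_nhds
      refine hcont.congr' ?_
      filter_upwards [Ioo_mem_nhdsGT hr.1] with t ht
      simp only [F, indicator_of_mem (show r ∈ Ioc t b from ⟨ht.2, hr.2⟩)]
  rw [integral_zero] at hlim
  refine hlim.congr' ?_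
  filter_upwards [self_mem_nhdsWithin] with t ht
  exact (hF t (le_of_lt ht)).symm

theorem stmt16 (ω : ℝ → ℝ) (hω0 : ∀ r ∈ Set.Ioc (0:ℝ) 1, 0 ≤ ω r)
    (hmono : MonotoneOn ω (Set.Ioc (0:ℝ) 1))
    (a : ℝ) (ha : 1 ≤ a)
    (hDini : IntegrableOn (fun r => ω r * |Real.log r| ^ a / r) (Set.Ioc (0:ℝ) 1))
    (c : ℝ) (hc : 0 < c) :
    (∃ t₀ ∈ Set.Ioo (0:ℝ) 1, ∀ t ∈ Set.Ioo (0:ℝ) t₀,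
      t ^ c * (∫ r in Set.Ioc t 1, ω r * r ^ (-1 - c)) +
        (∫ r in Set.Ioc (0:ℝ) t, ω r / r) ≤
      |Real.log t| ^ (-a) * ∫ r in Set.Ioc (0:ℝ) 1, ω r * |Real.log t| ^ a / r) ∧
    Tendsto (fun t => t ^ c * ∫ r in Set.Ioc t 1, ω r * r ^ (-1 - c))
      (nhdsWithin 0 (Set.Ioi 0)) (nhds 0) := by
  have hint : IntegrableOn (fun r => ω r / r) (Ioc 0 1) :=
    integrableOn_div_of_integrableOn_mul_abs_log_rpow_div hω0 hmono (by linarith) hDini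
  have hrepr : ∀ t : ℝ, 0 < t → t ^ c * ∫ r in Ioc t 1, ω r * r ^ (-1 - c) =
      ∫ r in Ioc t 1, (t / r) ^ c * (ω r / r) := by
    intro t ht
    rw [← integral_const_mul]
    refine setIntegral_congr_fun measurableSet_Ioc fun r hr => ?_
    have hr0 : 0 < r := ht.trans hr.1
    rw [div_rpow ht.le hr0.le, sub_eq_add_neg, add_comm, rpow_add hr0, rpow_neg_one,
      rpow_neg hr0.le]
    field_simp
  refine ⟨⟨1 / 2, by norm_num, fun t ht => ?_⟩, ?_⟩
  · have ht1 : t < 1 := by linarith [ht.2]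
    have hlog : 0 < |log t| := abs_pos.2 (log_neg ht.1 ht1).ne
    have hrhs : |log t| ^ (-a) * ∫ r in Ioc 0 1, ω r * |log t| ^ a / r =
        ∫ r in Ioc 0 1, ω r / r := by
      simp_rw [mul_comm (ω _), mul_div_assoc, integral_const_mul, ← mul_assoc,
        ← rpow_add hlog, neg_add_cancel, rpow_zero, one_mul]
    rw [hrepr t ht.1, hrhs, ← Ioc_union_Ioc_eq_Ioc ht.1.le ht1.le,
      setIntegral_union (Ioc_disjoint_Ioc_of_le le_rfl) measurableSet_Ioc
        (hint.mono_set (Ioc_subset_Ioc_right ht1.le))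
        (hint.mono_set (Ioc_subset_Ioc_left ht.1.le))]
    have := setIntegral_Ioc_div_rpow_mul_le ht.1.le hc.le
      (hint.mono_set (Ioc_subset_Ioc_left ht.1.le))
      fun r hr => div_nonneg (hω0 r ⟨ht.1.trans hr.1, hr.2⟩) (ht.1.trans hr.1).le
    linarith
  · refine (tendsto_setIntegral_Ioc_div_rpow_mul hc hint).congr' ?_
    filter_upwards [self_mem_nhdsWithin] with t ht
    exact (hrepr t ht).symm
end
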